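/- The Hörmander kernel satisfies the Chapman–Kolmogorov equation: for every X, Y ∈ ℝ^N and s, t > 0, p(X,Y,s+t) = ∫_{ℝ^N} p(X,Z,s) p(Z,Y,t) dZ. -/

import Mathlib

open MeasureTheory Matrix

/-- `t·K(t) = ∫₀ᵗ e^{sB} Q e^{sB*} ds`, defined entrywise. -/
noncomputable def tKmat {N : ℕ} (Q B : Matrix (Fin N) (Fin N) ℝ) (t : ℝ) : Matrix (Fin N) (Fin N) ℝ :=
  Matrix.of fun i j => ∫ s in (0:ℝ)..t,
    (NormedSpace.exp (s • B) * Q * (NormedSpace.exp (s • B))ᵀ) i j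

/-- `K(t) = (1/t) ∫₀ᵗ e^{sB} Q e^{sB*} ds`. -/
noncomputable def Kmat {N : ℕ} (Q B : Matrix (Fin N) (Fin N) ℝ) (t : ℝ) : Matrix (Fin N) (Fin N) ℝ :=
  t⁻¹ • tKmat Q B t

/-- The Hörmander kernel. -/
noncomputable def pker {N : ℕ} (Q B : Matrix (Fin N) (Fin N) ℝ) (X Y : Fin N → ℝ) (t : ℝ) : ℝ :=
  (4 * Real.pi) ^ (-(N : ℝ)/2) * (Matrix.det (t • Kmat Q B t)) ^ (-(1:ℝ)/2) *
    Real.exp (-(dotProduct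
      ((Kmat Q B t)⁻¹.mulVec (Y - (NormedSpace.exp (t • B)).mulVec X))
      (Y - (NormedSpace.exp (t • B)).mulVec X)) / (4 * t))

namespace CKaux

variable {N : ℕ}

/-- Gaussian-type kernel associated to a covariance-type matrix `C`. -/
noncomputable def gk (C : Matrix (Fin N) (Fin N) ℝ) (u : Fin N → ℝ) : ℝ :=
  (4 * Real.pi) ^ (-(N : ℝ)/2) * (Matrix.det C) ^ (-(1:ℝ)/2) *
    Real.exp (-((C⁻¹.mulVec u) ⬝ᵥ u) / 4)

/-- Over ℝ, conjTranspose is transpose. -/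
lemma conjT_eq_transpose (A : Matrix (Fin N) (Fin N) ℝ) : Aᴴ = Aᵀ :=
  Matrix.ext fun i j => star_trivial _

lemma PosDef.isSymm' {A : Matrix (Fin N) (Fin N) ℝ} (hA : A.PosDef) : Aᵀ = A := by
  have := hA.isHermitian
  rwa [Matrix.IsHermitian, conjT_eq_transpose] at this

/-- symmetric matrices move across dot products -/
lemma symm_dot {A : Matrix (Fin N) (Fin N) ℝ} (hA : Aᵀ = A) (x y : Fin N → ℝ) :
    (A.mulVec x) ⬝ᵥ y = (A.mulVec y) ⬝ᵥ x := by
  rw [dotProduct_comm, Matrix.dotProduct_mulVec, ← Matrix.mulVec_transpose, hA]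

lemma transpose_dot (A : Matrix (Fin N) (Fin N) ℝ) (x y : Fin N → ℝ) :
    (Aᵀ.mulVec x) ⬝ᵥ y = x ⬝ᵥ (A.mulVec y) := by
  rw [Matrix.mulVec_transpose, ← Matrix.dotProduct_mulVec]

lemma posDef_smul {A : Matrix (Fin N) (Fin N) ℝ} (hA : A.PosDef) {c : ℝ} (hc : 0 < c) :
    (c • A).PosDef := by
  refine Matrix.PosDef.of_dotProduct_mulVec_pos ?_ (fun x hx => ?_)
  · have h := hA.isHermitian
    rw [Matrix.IsHermitian, conjT_eq_transpose] at h ⊢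
    rw [Matrix.transpose_smul, h]
  · rw [Matrix.smul_mulVec, dotProduct_smul]
    exact mul_pos hc (hA.dotProduct_mulVec_pos hx)

lemma posDef_conj {A M : Matrix (Fin N) (Fin N) ℝ} (hM : M.PosDef) (hA : IsUnit A.det) :
    (A * M * Aᵀ).PosDef := by
  refine Matrix.PosDef.of_dotProduct_mulVec_pos ?_ (fun x hx => ?_)
  · have := (hM.posSemidef.mul_mul_conjTranspose_same A).isHermitian
    rwa [conjT_eq_transpose] at this
  · have hx' : Aᵀ.mulVec x ≠ 0 := by
      intro h
      apply hx
      have : (Aᵀ)⁻¹.mulVec (Aᵀ.mulVec x) = 0 := by rw [h, Matrix.mulVec_zero]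
      rwa [Matrix.mulVec_mulVec, Matrix.nonsing_inv_mul _ (by simpa using hA),
        Matrix.one_mulVec] at this
    have key : x ⬝ᵥ ((A * M * Aᵀ).mulVec x) = (Aᵀ.mulVec x) ⬝ᵥ (M.mulVec (Aᵀ.mulVec x)) := by
      rw [transpose_dot, ← Matrix.mulVec_mulVec, ← Matrix.mulVec_mulVec]
    have := hM.dotProduct_mulVec_pos hx'
    simpa [key] using this

lemma dot_self_eq_sum (v : Fin N → ℝ) : v ⬝ᵥ v = ∑ i, v i ^ 2 := by
  simp [dotProduct, sq]

/-- base Gaussian integral over the pi type -/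
lemma integral_gauss_pi :
    (∫ v : Fin N → ℝ, Real.exp (-(v ⬝ᵥ v) / 4)) = (4 * Real.pi) ^ ((N : ℝ) / 2) := by
  have hmp := EuclideanSpace.volume_preserving_symm_measurableEquiv_toLp (Fin N)
  rw [← hmp.integral_comp (MeasurableEquiv.toLp 2 (Fin N → ℝ)).symm.measurableEmbedding]
  have h1 : ∀ v : EuclideanSpace ℝ (Fin N),
      Real.exp (-(((MeasurableEquiv.toLp 2 (Fin N → ℝ)).symm v ⬝ᵥ
        (MeasurableEquiv.toLp 2 (Fin N → ℝ)).symm v)) / 4)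
      = Real.exp (-(4⁻¹ : ℝ) * ‖v‖ ^ 2) := by
    intro v
    congr 1
    rw [dot_self_eq_sum, EuclideanSpace.norm_eq, Real.sq_sqrt (by positivity)]
    have h2 : ∀ i, (MeasurableEquiv.toLp 2 (Fin N → ℝ)).symm v i = v i := fun i => rfl
    simp only [h2, Real.norm_eq_abs, sq_abs]
    ring
  rw [integral_congr_ae (Filter.Eventually.of_forall h1),
    GaussianFourier.integral_rexp_neg_mul_sq_norm (by norm_num : (0:ℝ) < 4⁻¹),
    finrank_euclideanSpace_fin]
  congr 1
  rw [div_eq_mul_inv, inv_inv, mul_comm]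

open scoped MatrixOrder in
/-- Gaussian integral with positive-definite quadratic form. -/
lemma integral_gauss_quad {M : Matrix (Fin N) (Fin N) ℝ} (hM : M.PosDef) :
    (∫ u : Fin N → ℝ, Real.exp (-(M.mulVec u ⬝ᵥ u) / 4))
      = (4 * Real.pi) ^ ((N : ℝ) / 2) * (M.det) ^ (-(1:ℝ)/2) := by
  classical
  set R := CFC.sqrt M with hRdef
  have hR2 : R * R = M := CFC.sqrt_mul_sqrt_self M hM.posSemidef.nonneg
  have hRsym : Rᵀ = R := by
    have h := (CFC.sqrt_nonneg M).posSemidef.isHermitian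
    rw [Matrix.IsHermitian, conjT_eq_transpose] at h
    exact h
  have hdet2 : R.det * R.det = M.det := by rw [← Matrix.det_mul, hR2]
  have hdetM : 0 < M.det := hM.det_pos
  have hdetR : R.det ≠ 0 := by
    intro h; rw [h, mul_zero] at hdet2; exact hdetM.ne' hdet2.symm
  have hquad : ∀ u : Fin N → ℝ, M.mulVec u ⬝ᵥ u = (R.mulVec u) ⬝ᵥ (R.mulVec u) := by
    intro u
    rw [← hR2, ← Matrix.mulVec_mulVec]
    rw [symm_dot hRsym (R.mulVec u) u]
  have hmap := Real.map_matrix_volume_pi_eq_smul_volume_pi (M := R) hdetR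
  have hcont : Continuous fun v : Fin N → ℝ => Real.exp (-(v ⬝ᵥ v) / 4) :=
    Real.continuous_exp.comp (((continuous_id.dotProduct continuous_id).neg).div_const 4)
  have hmeas : AEMeasurable (Matrix.toLin' R) (volume : Measure (Fin N → ℝ)) :=
    (Matrix.toLin' R).continuous_of_finiteDimensional.measurable.aemeasurable
  have key : (∫ u : Fin N → ℝ, Real.exp (-(R.mulVec u ⬝ᵥ R.mulVec u) / 4))
      = |R.det|⁻¹ * (4 * Real.pi) ^ ((N : ℝ) / 2) := by
    rw [show (fun u : Fin N → ℝ => Real.exp (-(R.mulVec u ⬝ᵥ R.mulVec u) / 4))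
        = fun u => Real.exp (-((Matrix.toLin' R u) ⬝ᵥ (Matrix.toLin' R u)) / 4) from
      funext fun u => by simp [Matrix.toLin'_apply]]
    rw [← integral_map hmeas hcont.aestronglyMeasurable]
    rw [hmap, integral_smul_measure, integral_gauss_pi]
    rw [ENNReal.toReal_ofReal (abs_nonneg _), abs_inv]
    norm_num
  have habs : |R.det|⁻¹ = M.det ^ (-(1:ℝ)/2) := by
    have h1 : |R.det| ^ 2 = M.det := by rw [sq_abs, sq, hdet2]
    have h2 : |R.det| = M.det ^ ((1:ℝ)/2) := by
      rw [← h1, ← Real.rpow_natCast |R.det| 2, ← Real.rpow_mul (abs_nonneg _)]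
      norm_num
    rw [h2, ← Real.rpow_neg_one, ← Real.rpow_mul hdetM.le]
    congr 1
    norm_num
  calc (∫ u : Fin N → ℝ, Real.exp (-(M.mulVec u ⬝ᵥ u) / 4))
      = ∫ u : Fin N → ℝ, Real.exp (-(R.mulVec u ⬝ᵥ R.mulVec u) / 4) := by simp only [hquad]
    _ = |R.det|⁻¹ * (4 * Real.pi) ^ ((N : ℝ) / 2) := key
    _ = (4 * Real.pi) ^ ((N : ℝ) / 2) * M.det ^ (-(1:ℝ)/2) := by rw [habs, mul_comm]


lemma dot_mulVec_symm {A : Matrix (Fin N) (Fin N) ℝ} (hA : Aᵀ = A) (x y : Fin N → ℝ) :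
    x ⬝ᵥ (A.mulVec y) = (A.mulVec x) ⬝ᵥ y := by
  rw [dotProduct_comm, symm_dot hA]

lemma quad_sub {A : Matrix (Fin N) (Fin N) ℝ} (hA : Aᵀ = A) (x y : Fin N → ℝ) :
    (A.mulVec (x - y)) ⬝ᵥ (x - y)
      = (A.mulVec x) ⬝ᵥ x - 2 * ((A.mulVec y) ⬝ᵥ x) + (A.mulVec y) ⬝ᵥ y := by
  rw [Matrix.mulVec_sub, sub_dotProduct, dotProduct_sub, dotProduct_sub,
    symm_dot hA x y]
  ring

section Conv

variable {V₁ V₂ : Matrix (Fin N) (Fin N) ℝ}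

/-- Completing the square. -/
lemma complete_square (h₁ : V₁.PosDef) (h₂ : V₂.PosDef) (a Y W : Fin N → ℝ) :
    (V₁⁻¹.mulVec (W - a)) ⬝ᵥ (W - a) + (V₂⁻¹.mulVec (Y - W)) ⬝ᵥ (Y - W)
      = ((V₁⁻¹ + V₂⁻¹).mulVec
            (W - (V₁⁻¹ + V₂⁻¹)⁻¹.mulVec (V₁⁻¹.mulVec a + V₂⁻¹.mulVec Y))) ⬝ᵥ
          (W - (V₁⁻¹ + V₂⁻¹)⁻¹.mulVec (V₁⁻¹.mulVec a + V₂⁻¹.mulVec Y))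
        + ((V₁ + V₂)⁻¹.mulVec (Y - a)) ⬝ᵥ (Y - a) := by
  classical
  set P₁ := V₁⁻¹ with hP₁
  set P₂ := V₂⁻¹ with hP₂
  set T := V₁ + V₂ with hT
  set S := T⁻¹ with hS
  set M := P₁ + P₂ with hMdef
  set b := P₁.mulVec a + P₂.mulVec Y with hb
  set w₀ := M⁻¹.mulVec b with hw₀
  have hTpd : T.PosDef := h₁.add h₂
  have hMpd : M.PosDef := h₁.inv.add h₂.inv
  have u₁ : IsUnit V₁.det := isUnit_iff_ne_zero.mpr h₁.det_pos.ne'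
  have u₂ : IsUnit V₂.det := isUnit_iff_ne_zero.mpr h₂.det_pos.ne'
  have uT : IsUnit T.det := isUnit_iff_ne_zero.mpr hTpd.det_pos.ne'
  have uM : IsUnit M.det := isUnit_iff_ne_zero.mpr hMpd.det_pos.ne'
  have i1 : V₁ * P₁ = 1 := Matrix.mul_nonsing_inv _ u₁
  have i1' : P₁ * V₁ = 1 := Matrix.nonsing_inv_mul _ u₁
  have i2 : V₂ * P₂ = 1 := Matrix.mul_nonsing_inv _ u₂
  have i2' : P₂ * V₂ = 1 := Matrix.nonsing_inv_mul _ u₂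
  have iT' : S * T = 1 := Matrix.nonsing_inv_mul _ uT
  have iM : M * M⁻¹ = 1 := Matrix.mul_nonsing_inv _ uM
  have sP₁ : P₁ᵀ = P₁ := PosDef.isSymm' h₁.inv
  have sP₂ : P₂ᵀ = P₂ := PosDef.isSymm' h₂.inv
  have sS : Sᵀ = S := PosDef.isSymm' hTpd.inv
  have sM : Mᵀ = M := PosDef.isSymm' hMpd
  -- key matrix identities
  have hA : P₁ * T * P₂ = M := by
    have e : P₁ * T * P₂ = (P₁ * V₁) * P₂ + P₁ * (V₂ * P₂) := by
      rw [hT, mul_add, add_mul, mul_assoc P₁ V₂ P₂]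
    rw [e, i1', one_mul, i2, mul_one, hMdef]
    exact add_comm P₂ P₁
  have hA' : P₂ * T * P₁ = M := by
    have e : P₂ * T * P₁ = P₂ * (V₁ * P₁) + (P₂ * V₂) * P₁ := by
      rw [hT, mul_add, add_mul, mul_assoc P₂ V₁ P₁]
    rw [e, i1, mul_one, i2', one_mul, hMdef]
    exact add_comm P₂ P₁
  have hMinv : M⁻¹ = V₂ * (S * V₁) := by
    rw [← hA, Matrix.mul_inv_rev, Matrix.mul_inv_rev, hP₁, hP₂,
      Matrix.nonsing_inv_nonsing_inv _ u₂, Matrix.nonsing_inv_nonsing_inv _ u₁, ← hS]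
  have hMinv' : M⁻¹ = V₁ * (S * V₂) := by
    rw [← hA', Matrix.mul_inv_rev, Matrix.mul_inv_rev, hP₁, hP₂,
      Matrix.nonsing_inv_nonsing_inv _ u₂, Matrix.nonsing_inv_nonsing_inv _ u₁, ← hS]
  have e1 : P₁ * M⁻¹ * P₁ = P₁ - S := by
    have step : P₁ * M⁻¹ * P₁ = S * (V₂ * P₁) := by
      rw [hMinv', ← mul_assoc P₁ V₁, i1', one_mul, mul_assoc]
    have key : S * (V₂ * P₁) + S = P₁ := by
      have h5 : S * (V₁ * P₁) = S := by rw [i1, mul_one]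
      calc S * (V₂ * P₁) + S = S * (V₂ * P₁) + S * (V₁ * P₁) := by rw [h5]
        _ = S * ((V₂ + V₁) * P₁) := by rw [← mul_add, ← add_mul]
        _ = (S * T) * P₁ := by rw [show V₂ + V₁ = T from add_comm V₂ V₁, mul_assoc]
        _ = P₁ := by rw [iT', one_mul]
    rw [step, eq_sub_iff_add_eq, key]
  have e2 : P₂ * M⁻¹ * P₂ = P₂ - S := by
    have step : P₂ * M⁻¹ * P₂ = S * (V₁ * P₂) := by
      rw [hMinv, ← mul_assoc P₂ V₂, i2', one_mul, mul_assoc]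
    have key : S * (V₁ * P₂) + S = P₂ := by
      have h5 : S * (V₂ * P₂) = S := by rw [i2, mul_one]
      calc S * (V₁ * P₂) + S = S * (V₁ * P₂) + S * (V₂ * P₂) := by rw [h5]
        _ = S * ((V₁ + V₂) * P₂) := by rw [← mul_add, ← add_mul]
        _ = (S * T) * P₂ := by rw [← hT, mul_assoc]
        _ = P₂ := by rw [iT', one_mul]
    rw [step, eq_sub_iff_add_eq, key]
  have e3 : P₂ * M⁻¹ * P₁ = S := by
    rw [hMinv, ← mul_assoc P₂ V₂, i2', one_mul, mul_assoc, i1, mul_one]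
  have e4 : P₁ * M⁻¹ * P₂ = S := by
    rw [hMinv', ← mul_assoc P₁ V₁, i1', one_mul, mul_assoc, i2, mul_one]
  -- expansion of (M⁻¹ b) ⬝ b
  have hbb : (M⁻¹.mulVec b) ⬝ᵥ b
      = ((P₁.mulVec a) ⬝ᵥ a - (S.mulVec a) ⬝ᵥ a)
        + ((P₂.mulVec Y) ⬝ᵥ Y - (S.mulVec Y) ⬝ᵥ Y) + 2 * ((S.mulVec a) ⬝ᵥ Y) := by
    have t1 : (M⁻¹.mulVec (P₁.mulVec a)) ⬝ᵥ (P₁.mulVec a)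
        = (P₁.mulVec a) ⬝ᵥ a - (S.mulVec a) ⬝ᵥ a := by
      rw [dot_mulVec_symm sP₁]
      simp only [Matrix.mulVec_mulVec, ← mul_assoc]
      rw [e1, Matrix.sub_mulVec, sub_dotProduct]
    have t2 : (M⁻¹.mulVec (P₁.mulVec a)) ⬝ᵥ (P₂.mulVec Y)
        = (S.mulVec a) ⬝ᵥ Y := by
      rw [dot_mulVec_symm sP₂]
      simp only [Matrix.mulVec_mulVec, ← mul_assoc]
      rw [e3]
    have t3 : (M⁻¹.mulVec (P₂.mulVec Y)) ⬝ᵥ (P₁.mulVec a)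
        = (S.mulVec a) ⬝ᵥ Y := by
      rw [dot_mulVec_symm sP₁]
      simp only [Matrix.mulVec_mulVec, ← mul_assoc]
      rw [e4, symm_dot sS Y a]
    have t4 : (M⁻¹.mulVec (P₂.mulVec Y)) ⬝ᵥ (P₂.mulVec Y)
        = (P₂.mulVec Y) ⬝ᵥ Y - (S.mulVec Y) ⬝ᵥ Y := by
      rw [dot_mulVec_symm sP₂]
      simp only [Matrix.mulVec_mulVec, ← mul_assoc]
      rw [e2, Matrix.sub_mulVec, sub_dotProduct]
    rw [hb, Matrix.mulVec_add, add_dotProduct, dotProduct_add,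
      dotProduct_add, t1, t2, t3, t4]
    ring
  -- now expand everything
  have hMw : M.mulVec w₀ = b := by
    rw [hw₀, Matrix.mulVec_mulVec, iM, Matrix.one_mulVec]
  have hw₀dot : (M.mulVec w₀) ⬝ᵥ w₀ = (M⁻¹.mulVec b) ⬝ᵥ b := by
    rw [hMw, hw₀, dotProduct_comm]
  rw [quad_sub sP₁ W a, quad_sub sP₂ Y W, quad_sub sM W w₀, quad_sub sS Y a, hw₀dot, hbb, hMw]
  rw [hMdef, Matrix.add_mulVec, add_dotProduct]
  rw [hb, add_dotProduct]
  rw [symm_dot sP₂ W Y]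
  ring

/-- Convolution of two Gaussian kernels. -/
lemma gk_conv (h₁ : V₁.PosDef) (h₂ : V₂.PosDef) (a Y : Fin N → ℝ) :
    (∫ W : Fin N → ℝ, gk V₁ (W - a) * gk V₂ (Y - W)) = gk (V₁ + V₂) (Y - a) := by
  classical
  have hTpd : (V₁ + V₂).PosDef := h₁.add h₂
  have hMpd : (V₁⁻¹ + V₂⁻¹).PosDef := h₁.inv.add h₂.inv
  have u₁ : IsUnit V₁.det := isUnit_iff_ne_zero.mpr h₁.det_pos.ne'
  have u₂ : IsUnit V₂.det := isUnit_iff_ne_zero.mpr h₂.det_pos.ne'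
  have i1 : V₁ * V₁⁻¹ = 1 := Matrix.mul_nonsing_inv _ u₁
  have i1' : V₁⁻¹ * V₁ = 1 := Matrix.nonsing_inv_mul _ u₁
  have i2 : V₂ * V₂⁻¹ = 1 := Matrix.mul_nonsing_inv _ u₂
  have i2' : V₂⁻¹ * V₂ = 1 := Matrix.nonsing_inv_mul _ u₂
  set w₀ := (V₁⁻¹ + V₂⁻¹)⁻¹.mulVec (V₁⁻¹.mulVec a + V₂⁻¹.mulVec Y) with hw₀
  have hdet : V₁.det * (V₁⁻¹ + V₂⁻¹).det * V₂.det = (V₁ + V₂).det := by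
    have h1 : V₁ * (V₁⁻¹ + V₂⁻¹) * V₂ = V₁ + V₂ := by
      have e : V₁ * (V₁⁻¹ + V₂⁻¹) * V₂ = (V₁ * V₁⁻¹) * V₂ + V₁ * (V₂⁻¹ * V₂) := by
        rw [mul_add, add_mul, mul_assoc V₁ V₂⁻¹ V₂]
      rw [e, i1, one_mul, i2', mul_one, add_comm]
    rw [← h1, Matrix.det_mul, Matrix.det_mul]
  -- pointwise rewriting of the integrand
  have hpt : ∀ W : Fin N → ℝ, gk V₁ (W - a) * gk V₂ (Y - W)
      = ((4 * Real.pi) ^ (-(N : ℝ)/2) * (V₁.det) ^ (-(1:ℝ)/2)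
          * ((4 * Real.pi) ^ (-(N : ℝ)/2) * (V₂.det) ^ (-(1:ℝ)/2))
          * Real.exp (-(((V₁ + V₂)⁻¹.mulVec (Y - a)) ⬝ᵥ (Y - a)) / 4))
        * Real.exp (-(((V₁⁻¹ + V₂⁻¹).mulVec (W - w₀)) ⬝ᵥ (W - w₀)) / 4) := by
    intro W
    rw [gk, gk]
    rw [show ∀ c₁ d₁ e₁ c₂ d₂ e₂ : ℝ, c₁ * d₁ * e₁ * (c₂ * d₂ * e₂)
        = (c₁ * d₁ * (c₂ * d₂)) * (e₁ * e₂) from fun _ _ _ _ _ _ => by ring]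
    rw [← Real.exp_add]
    have hcs := complete_square h₁ h₂ a Y W
    rw [← hw₀] at hcs
    rw [show -((V₁⁻¹.mulVec (W - a)) ⬝ᵥ (W - a)) / 4 + -((V₂⁻¹.mulVec (Y - W)) ⬝ᵥ (Y - W)) / 4
        = -(((V₁⁻¹.mulVec (W - a)) ⬝ᵥ (W - a)) + ((V₂⁻¹.mulVec (Y - W)) ⬝ᵥ (Y - W))) / 4
       from by ring, hcs]
    rw [show -((((V₁⁻¹ + V₂⁻¹).mulVec (W - w₀)) ⬝ᵥ (W - w₀))
          + (((V₁ + V₂)⁻¹.mulVec (Y - a)) ⬝ᵥ (Y - a))) / 4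
        = -(((V₁ + V₂)⁻¹.mulVec (Y - a)) ⬝ᵥ (Y - a)) / 4
          + -((((V₁⁻¹ + V₂⁻¹).mulVec (W - w₀)) ⬝ᵥ (W - w₀))) / 4 from by ring]
    rw [Real.exp_add]
    ring
  rw [integral_congr_ae (Filter.Eventually.of_forall hpt), MeasureTheory.integral_const_mul]
  have htrans : (∫ W : Fin N → ℝ,
      Real.exp (-(((V₁⁻¹ + V₂⁻¹).mulVec (W - w₀)) ⬝ᵥ (W - w₀)) / 4))
      = (4 * Real.pi) ^ ((N : ℝ)/2) * ((V₁⁻¹ + V₂⁻¹).det) ^ (-(1:ℝ)/2) := by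
    rw [integral_sub_right_eq_self
      (fun u => Real.exp (-(((V₁⁻¹ + V₂⁻¹).mulVec u) ⬝ᵥ u) / 4)) w₀]
    exact integral_gauss_quad hMpd
  rw [htrans, gk]
  -- arithmetic with rpow
  have h4π : (0:ℝ) < 4 * Real.pi := by positivity
  have hd1 : (0:ℝ) < V₁.det := h₁.det_pos
  have hd2 : (0:ℝ) < V₂.det := h₂.det_pos
  have hdM : (0:ℝ) < (V₁⁻¹ + V₂⁻¹).det := hMpd.det_pos
  have hpow : (4 * Real.pi) ^ (-(N : ℝ)/2) * (4 * Real.pi) ^ ((N : ℝ)/2) = 1 := by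
    rw [← Real.rpow_add h4π, show (-(N:ℝ)/2 + (N:ℝ)/2) = 0 by ring, Real.rpow_zero]
  have hdets : (V₁.det) ^ (-(1:ℝ)/2) * (V₂.det) ^ (-(1:ℝ)/2) * ((V₁⁻¹ + V₂⁻¹).det) ^ (-(1:ℝ)/2)
      = ((V₁ + V₂).det) ^ (-(1:ℝ)/2) := by
    rw [← Real.mul_rpow hd1.le hd2.le, ← Real.mul_rpow (by positivity) hdM.le]
    rw [show V₁.det * V₂.det * (V₁⁻¹ + V₂⁻¹).det = V₁.det * (V₁⁻¹ + V₂⁻¹).det * V₂.det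
      from by ring, hdet]
  calc (4 * Real.pi) ^ (-(N : ℝ)/2) * (V₁.det) ^ (-(1:ℝ)/2)
          * ((4 * Real.pi) ^ (-(N : ℝ)/2) * (V₂.det) ^ (-(1:ℝ)/2))
          * Real.exp (-(((V₁ + V₂)⁻¹.mulVec (Y - a)) ⬝ᵥ (Y - a)) / 4)
          * ((4 * Real.pi) ^ ((N : ℝ)/2) * ((V₁⁻¹ + V₂⁻¹).det) ^ (-(1:ℝ)/2))
      = ((4 * Real.pi) ^ (-(N : ℝ)/2) * (4 * Real.pi) ^ ((N : ℝ)/2))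
          * (4 * Real.pi) ^ (-(N : ℝ)/2)
          * ((V₁.det) ^ (-(1:ℝ)/2) * (V₂.det) ^ (-(1:ℝ)/2) * ((V₁⁻¹ + V₂⁻¹).det) ^ (-(1:ℝ)/2))
          * Real.exp (-(((V₁ + V₂)⁻¹.mulVec (Y - a)) ⬝ᵥ (Y - a)) / 4) := by ring
    _ = (4 * Real.pi) ^ (-(N : ℝ)/2) * ((V₁ + V₂).det) ^ (-(1:ℝ)/2)
          * Real.exp (-(((V₁ + V₂)⁻¹.mulVec (Y - a)) ⬝ᵥ (Y - a)) / 4) := by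
        rw [hpow, hdets, one_mul]

end Conv


section ExpFacts

variable (B : Matrix (Fin N) (Fin N) ℝ)

noncomputable def E (B : Matrix (Fin N) (Fin N) ℝ) (t : ℝ) : Matrix (Fin N) (Fin N) ℝ :=
  NormedSpace.exp (t • B)

lemma E_add (s t : ℝ) : E B (s + t) = E B t * E B s := by
  rw [E, E, E, add_smul, add_comm]
  exact Matrix.exp_add_of_commute _ _ (Commute.smul_left (Commute.smul_right rfl t) s).symm

lemma E_isUnit (t : ℝ) : IsUnit (E B t) := Matrix.isUnit_exp _

lemma E_det_ne (t : ℝ) : (E B t).det ≠ 0 := by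
  intro h
  have := (Matrix.isUnit_iff_isUnit_det _).mp (E_isUnit B t)
  rw [h] at this
  exact this.ne_zero rfl

lemma E_continuous : Continuous (E B) := by
  letI : SeminormedRing (Matrix (Fin N) (Fin N) ℝ) := Matrix.linftyOpSemiNormedRing
  letI : NormedRing (Matrix (Fin N) (Fin N) ℝ) := Matrix.linftyOpNormedRing
  letI : NormedAlgebra ℝ (Matrix (Fin N) (Fin N) ℝ) := Matrix.linftyOpNormedAlgebra
  letI : NormedAlgebra ℚ (Matrix (Fin N) (Fin N) ℝ) := Matrix.linftyOpNormedAlgebra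
  exact NormedSpace.exp_continuous.comp (continuous_id.smul continuous_const)

end ExpFacts

section Semigroup

variable (Q B : Matrix (Fin N) (Fin N) ℝ)

lemma F_continuous : Continuous (fun u : ℝ => E B u * Q * (E B u)ᵀ) :=
  ((E_continuous B).matrix_mul continuous_const).matrix_mul (E_continuous B).matrix_transpose

lemma tKmat_eq (t : ℝ) :
    tKmat Q B t = Matrix.of fun i j => ∫ u in (0:ℝ)..t, (E B u * Q * (E B u)ᵀ) i j := rfl

/-- the covariance semigroup property -/
lemma tKmat_semigroup (s t : ℝ) :
    tKmat Q B (s + t) = E B t * tKmat Q B s * (E B t)ᵀ + tKmat Q B t := by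
  have hcont := F_continuous Q B
  have hint : ∀ (i j) (x y : ℝ),
      IntervalIntegrable (fun u => (E B u * Q * (E B u)ᵀ) i j) volume x y :=
    fun i j x y => ((hcont.matrix_elem i j)).intervalIntegrable x y
  ext i j
  have hsplit : (∫ u in (0:ℝ)..(s+t), (E B u * Q * (E B u)ᵀ) i j)
      = (∫ u in (0:ℝ)..t, (E B u * Q * (E B u)ᵀ) i j)
        + ∫ u in t..(s+t), (E B u * Q * (E B u)ᵀ) i j :=
    (intervalIntegral.integral_add_adjacent_intervals (hint i j 0 t) (hint i j t (s+t))).symm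
  have hshift : (∫ u in t..(s+t), (E B u * Q * (E B u)ᵀ) i j)
      = ∫ u in (0:ℝ)..s, (E B (u + t) * Q * (E B (u + t))ᵀ) i j := by
    rw [intervalIntegral.integral_comp_add_right (fun u => (E B u * Q * (E B u)ᵀ) i j) t,
      zero_add, add_comm s t]
  have hconj : ∀ u : ℝ, E B (u + t) * Q * (E B (u + t))ᵀ
      = E B t * (E B u * Q * (E B u)ᵀ) * (E B t)ᵀ := by
    intro u
    rw [E_add B u t, Matrix.transpose_mul]
    noncomm_ring
  have hentry : ∀ (A M : Matrix (Fin N) (Fin N) ℝ),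
      (A * M * Aᵀ) i j = ∑ l, ∑ k, A i k * M k l * A j l := by
    intro A M
    rw [Matrix.mul_apply]
    refine Finset.sum_congr rfl fun l _ => ?_
    rw [Matrix.mul_apply, Matrix.transpose_apply, Finset.sum_mul]
  have hctk : ∀ k l, Continuous fun u : ℝ =>
      (E B t) i k * (E B u * Q * (E B u)ᵀ) k l * (E B t) j l :=
    fun k l => (continuous_const.mul (hcont.matrix_elem k l)).mul continuous_const
  have hswap : (∫ u in (0:ℝ)..s, (E B (u + t) * Q * (E B (u + t))ᵀ) i j)
      = (E B t * tKmat Q B s * (E B t)ᵀ) i j := by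
    calc (∫ u in (0:ℝ)..s, (E B (u + t) * Q * (E B (u + t))ᵀ) i j)
        = ∫ u in (0:ℝ)..s, ∑ l, ∑ k,
            (E B t) i k * (E B u * Q * (E B u)ᵀ) k l * (E B t) j l := by
          refine intervalIntegral.integral_congr fun u _ => ?_
          rw [hconj u, hentry]
      _ = ∑ l, ∫ u in (0:ℝ)..s, ∑ k,
            (E B t) i k * (E B u * Q * (E B u)ᵀ) k l * (E B t) j l := by
          refine intervalIntegral.integral_finset_sum fun l _ => ?_
          exact (continuous_finset_sum _ fun k _ => hctk k l).intervalIntegrable 0 s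
      _ = ∑ l, ∑ k, ∫ u in (0:ℝ)..s,
            (E B t) i k * (E B u * Q * (E B u)ᵀ) k l * (E B t) j l := by
          refine Finset.sum_congr rfl fun l _ => ?_
          exact intervalIntegral.integral_finset_sum fun k _ =>
            (hctk k l).intervalIntegrable 0 s
      _ = ∑ l, ∑ k, (E B t) i k * (tKmat Q B s) k l * (E B t) j l := by
          refine Finset.sum_congr rfl fun l _ => Finset.sum_congr rfl fun k _ => ?_
          rw [intervalIntegral.integral_mul_const, intervalIntegral.integral_const_mul]
          rfl
      _ = (E B t * tKmat Q B s * (E B t)ᵀ) i j := (hentry _ _).symm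
  rw [Matrix.add_apply]
  rw [show (tKmat Q B (s+t)) i j
      = ∫ u in (0:ℝ)..(s+t), (E B u * Q * (E B u)ᵀ) i j from rfl]
  rw [show (tKmat Q B t) i j = ∫ u in (0:ℝ)..t, (E B u * Q * (E B u)ᵀ) i j from rfl]
  rw [hsplit, hshift, hswap]
  ring

end Semigroup


lemma gk_continuous (C : Matrix (Fin N) (Fin N) ℝ) : Continuous (gk C) := by
  apply Continuous.mul continuous_const
  exact Real.continuous_exp.comp
    (((continuous_const.matrix_mulVec continuous_id).dotProduct continuous_id).neg.div_const 4)

/-- conjugation rule for the Gaussian kernel under an invertible change of variables -/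
lemma gk_conj {C A : Matrix (Fin N) (Fin N) ℝ} (hC : C.PosDef) (hA : A.det ≠ 0)
    (v : Fin N → ℝ) :
    |A.det|⁻¹ * gk C (A⁻¹.mulVec v) = gk (A * C * Aᵀ) v := by
  have uA : IsUnit A.det := isUnit_iff_ne_zero.mpr hA
  have uAT : IsUnit Aᵀ.det := by rwa [Matrix.det_transpose]
  have hdet : (A * C * Aᵀ).det = A.det ^ 2 * C.det := by
    rw [Matrix.det_mul, Matrix.det_mul, Matrix.det_transpose]; ring
  have hrpow : ((A * C * Aᵀ).det) ^ (-(1:ℝ)/2) = |A.det|⁻¹ * (C.det) ^ (-(1:ℝ)/2) := by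
    rw [hdet, ← sq_abs, Real.mul_rpow (by positivity) hC.det_pos.le,
      ← Real.rpow_natCast |A.det| 2, ← Real.rpow_mul (abs_nonneg _),
      show ((2:ℕ):ℝ) * (-(1:ℝ)/2) = -1 by norm_num, Real.rpow_neg_one]
  have hquad : ((A * C * Aᵀ)⁻¹.mulVec v) ⬝ᵥ v
      = (C⁻¹.mulVec (A⁻¹.mulVec v)) ⬝ᵥ (A⁻¹.mulVec v) := by
    rw [Matrix.mul_inv_rev, Matrix.mul_inv_rev, ← Matrix.transpose_nonsing_inv,
      ← Matrix.mulVec_mulVec, transpose_dot, ← Matrix.mulVec_mulVec]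
  rw [gk, gk, hrpow, hquad]
  ring

lemma tKmat_eq_smul (Q B : Matrix (Fin N) (Fin N) ℝ) {t : ℝ} (ht : t ≠ 0) :
    t • Kmat Q B t = tKmat Q B t := by
  rw [Kmat, smul_smul, mul_inv_cancel₀ ht, one_smul]

lemma tKmat_posDef (Q B : Matrix (Fin N) (Fin N) ℝ) {t : ℝ} (ht : 0 < t)
    (hK : (Kmat Q B t).PosDef) : (tKmat Q B t).PosDef := by
  rw [← tKmat_eq_smul Q B ht.ne']
  exact posDef_smul hK ht

lemma pker_eq_gk (Q B : Matrix (Fin N) (Fin N) ℝ) {t : ℝ} (ht : 0 < t)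
    (hpd : (tKmat Q B t).PosDef) (X Y : Fin N → ℝ) :
    pker Q B X Y t = gk (tKmat Q B t) (Y - (E B t).mulVec X) := by
  have hsm : t • Kmat Q B t = tKmat Q B t := tKmat_eq_smul Q B ht.ne'
  have hKinv : (Kmat Q B t)⁻¹ = t • (tKmat Q B t)⁻¹ := by
    apply Matrix.inv_eq_right_inv
    rw [Kmat, Matrix.smul_mul, Matrix.mul_smul, smul_smul, inv_mul_cancel₀ ht.ne',
      Matrix.mul_nonsing_inv _ (isUnit_iff_ne_zero.mpr hpd.det_pos.ne'), one_smul]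
  rw [pker, gk, hsm, hKinv]
  have : E B t = NormedSpace.exp (t • B) := rfl
  rw [this]
  congr 1
  rw [Matrix.smul_mulVec, smul_dotProduct, smul_eq_mul]
  rw [show ∀ d : ℝ, -(t * d) / (4 * t) = -d/4 * (t/t) from fun d => by ring,
    div_self ht.ne', mul_one]


lemma integral_change (A : Matrix (Fin N) (Fin N) ℝ) (hA : A.det ≠ 0)
    (F : (Fin N → ℝ) → ℝ) (hF : Continuous F) :
    (∫ Z : Fin N → ℝ, F Z) = |A.det|⁻¹ * ∫ W : Fin N → ℝ, F (A⁻¹.mulVec W) := by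
  classical
  have hdetinv : (A⁻¹).det = A.det⁻¹ := by
    rw [Matrix.det_nonsing_inv, Ring.inverse_eq_inv']
  have hAinv : (A⁻¹).det ≠ 0 := by rw [hdetinv]; exact inv_ne_zero hA
  have hmap := Real.map_matrix_volume_pi_eq_smul_volume_pi (M := A⁻¹) hAinv
  have hmeas : AEMeasurable (Matrix.toLin' A⁻¹) (volume : Measure (Fin N → ℝ)) :=
    (Matrix.toLin' A⁻¹).continuous_of_finiteDimensional.measurable.aemeasurable
  have key : (∫ W : Fin N → ℝ, F (A⁻¹.mulVec W)) = |A.det| * ∫ Z : Fin N → ℝ, F Z := by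
    calc (∫ W : Fin N → ℝ, F (A⁻¹.mulVec W))
        = ∫ W : Fin N → ℝ, F (Matrix.toLin' A⁻¹ W) := by
          simp only [Matrix.toLin'_apply]
      _ = ∫ Z, F Z ∂(Measure.map (Matrix.toLin' A⁻¹) volume) :=
          (integral_map hmeas hF.aestronglyMeasurable).symm
      _ = (ENNReal.ofReal |(A⁻¹).det⁻¹|).toReal * ∫ Z, F Z := by
          rw [hmap, integral_smul_measure, smul_eq_mul]
      _ = |A.det| * ∫ Z, F Z := by
          rw [ENNReal.toReal_ofReal (abs_nonneg _), hdetinv, inv_inv]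
  rw [key, ← mul_assoc, inv_mul_cancel₀ (by simpa using hA : |A.det| ≠ 0), one_mul]

end CKaux

open CKaux in
/-- Chapman–Kolmogorov: `p(X,Y,s+t) = ∫ p(X,Z,s) p(Z,Y,t) dZ`. -/
theorem pker_chapman_kolmogorov {N : ℕ} (Q B : Matrix (Fin N) (Fin N) ℝ)
    (hQ : Q.PosSemidef) (hK : ∀ t : ℝ, 0 < t → (Kmat Q B t).PosDef) :
    ∀ (X Y : Fin N → ℝ) (s t : ℝ), 0 < s → 0 < t →
      pker Q B X Y (s + t) = ∫ Z : Fin N → ℝ, pker Q B X Z s * pker Q B Z Y t := by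
  intro X Y s t hs ht
  have hst : 0 < s + t := by linarith
  have hpds : (tKmat Q B s).PosDef := tKmat_posDef Q B hs (hK s hs)
  have hpdt : (tKmat Q B t).PosDef := tKmat_posDef Q B ht (hK t ht)
  have hpdst : (tKmat Q B (s + t)).PosDef := tKmat_posDef Q B hst (hK _ hst)
  have hAdet : (E B t).det ≠ 0 := E_det_ne B t
  have uA : IsUnit (E B t).det := isUnit_iff_ne_zero.mpr hAdet
  have hconjpd : (E B t * tKmat Q B s * (E B t)ᵀ).PosDef := posDef_conj hpds uA
  set F := fun Z : Fin N → ℝ => gk (tKmat Q B s) (Z - (E B s).mulVec X)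
    * gk (tKmat Q B t) (Y - (E B t).mulVec Z) with hF
  have hFc : Continuous F :=
    ((gk_continuous _).comp (continuous_id.sub continuous_const)).mul
      ((gk_continuous _).comp (continuous_const.sub
        (continuous_const.matrix_mulVec continuous_id)))
  have hpt1 : ∀ Z : Fin N → ℝ, pker Q B X Z s * pker Q B Z Y t = F Z := fun Z => by
    rw [hF, pker_eq_gk Q B hs hpds, pker_eq_gk Q B ht hpdt]
  rw [integral_congr_ae (Filter.Eventually.of_forall hpt1),
    integral_change (E B t) hAdet F hFc, ← MeasureTheory.integral_const_mul]
  have hpt2 : ∀ W : Fin N → ℝ, |(E B t).det|⁻¹ * F ((E B t)⁻¹.mulVec W)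
      = gk (E B t * tKmat Q B s * (E B t)ᵀ) (W - (E B (s + t)).mulVec X)
        * gk (tKmat Q B t) (Y - W) := by
    intro W
    have hm : (E B t)⁻¹.mulVec (W - (E B (s + t)).mulVec X)
        = (E B t)⁻¹.mulVec W - (E B s).mulVec X := by
      rw [Matrix.mulVec_sub]
      congr 1
      rw [E_add, ← Matrix.mulVec_mulVec, Matrix.mulVec_mulVec,
        Matrix.nonsing_inv_mul _ uA, Matrix.one_mulVec]
    have hid : (E B t).mulVec ((E B t)⁻¹.mulVec W) = W := by
      rw [Matrix.mulVec_mulVec, Matrix.mul_nonsing_inv _ uA, Matrix.one_mulVec]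
    rw [hF]
    simp only []
    rw [hid, ← hm, ← mul_assoc, gk_conj hpds hAdet]
  rw [integral_congr_ae (Filter.Eventually.of_forall hpt2),
    gk_conv hconjpd hpdt ((E B (s + t)).mulVec X) Y, ← tKmat_semigroup Q B s t,
    pker_eq_gk Q B hst hpdst]
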